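/- For every integer n ≥ 2, the sum over all vertex-labeled trees T on {1, …, n} of ∏_{i=1}^n (d_T(i) − 1)! equals (2n−3)!/(n−1)!, i.e., equals (n−2)! · C(2n−3, n−1). Equivalently, the number of vertex-labeled plane trees on n vertices (trees together with a choice of cyclic order of the edges at each vertex) is C(2n−3, n−1). -/

import Mathlib

open scoped Classical

open SimpleGraph Finset

/-- The degree of vertex `i` in the simple graph `G`. -/
noncomputable def treeDeg {n : ℕ} (G : SimpleGraph (Fin n)) (i : Fin n) : ℕ :=
  Nat.card (G.neighborSet i)

/-- The finite set of vertex-labeled trees on `{0, …, n-1}`: simple graphs on `Fin n`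
that are connected and acyclic. -/
noncomputable def treeFinset (n : ℕ) : Finset (SimpleGraph (Fin n)) :=
  Finset.univ.filter (fun G => G.IsTree)

variable {V : Type*} {G : SimpleGraph V}

lemma walk_closed {S : Set V} (hS : ∀ x ∈ S, ∀ y, G.Adj x y → y ∈ S) :
    ∀ {a b : V} (_ : G.Walk a b), a ∈ S → b ∈ S := by
  intro a b p
  induction p with
  | nil => exact id
  | cons h q ih => exact fun ha => ih (hS _ ha _ h)

lemma exists_concat {u v : V} (p : G.Walk u v) (hp : ¬ p.Nil) :
    ∃ (w : V) (q : G.Walk u w) (h : G.Adj w v), p = q.concat h := by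
  have hrev : ¬ p.reverse.Nil := by
    rwa [SimpleGraph.Walk.not_nil_iff_lt_length, SimpleGraph.Walk.length_reverse,
      ← SimpleGraph.Walk.not_nil_iff_lt_length]
  obtain ⟨w, h, q, hq⟩ := SimpleGraph.Walk.not_nil_iff.mp hrev
  refine ⟨w, q.reverse, h.symm, ?_⟩
  have := congrArg SimpleGraph.Walk.reverse hq
  rwa [SimpleGraph.Walk.reverse_reverse, SimpleGraph.Walk.reverse_cons] at this

lemma path_avoids_leaf {x w : V} (hx : ∀ y, G.Adj x y ↔ y = w) {u v : V} {p : G.Walk u v}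
    (hp : p.IsPath) (hu : u ≠ x) (hv : v ≠ x) : x ∉ p.support := by
  intro hmem
  set q := p.takeUntil x hmem with hqdef
  set r := p.dropUntil x hmem with hrdef
  have hq : ¬ q.Nil := SimpleGraph.Walk.not_nil_of_ne hu
  have hr : ¬ r.Nil := SimpleGraph.Walk.not_nil_of_ne (Ne.symm hv)
  obtain ⟨z, q', hzx, hq'⟩ := exists_concat q hq
  obtain ⟨y, hxy, r', hr'⟩ := SimpleGraph.Walk.not_nil_iff.mp hr
  have hz : z = w := (hx z).mp hzx.symm
  have hy : y = w := (hx y).mp hxy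
  have hsup : p.support = q.support ++ r.support.tail := by
    conv_lhs => rw [← p.take_spec hmem]
    exact SimpleGraph.Walk.support_append _ _
  have hnodup : (q.support ++ r.support.tail).Nodup := by
    rw [← hsup]; exact hp.support_nodup
  have hwq : w ∈ q.support := by
    rw [hq']
    rw [SimpleGraph.Walk.support_concat]
    exact List.mem_append_left _ (hz ▸ q'.end_mem_support)
  have hwr : w ∈ r.support.tail := by
    rw [hr']
    simp only [SimpleGraph.Walk.support_cons, List.tail_cons]
    exact hy ▸ r'.start_mem_support
  exact (List.disjoint_of_nodup_append hnodup) hwq hwr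

lemma cycle_avoids_leaf {x w : V} (hx : ∀ y, G.Adj x y ↔ y = w) {v : V} {c : G.Walk v v}
    (hc : c.IsCycle) : x ∉ c.support := by
  intro hmem
  have hc' : (c.rotate x hmem).IsCycle := hc.rotate hmem
  set c' := c.rotate x hmem with hc'def
  clear_value c'
  obtain ⟨y, hxy, q, hq⟩ := SimpleGraph.Walk.not_nil_iff.mp hc'.not_nil
  obtain rfl : y = w := (hx y).mp hxy
  have hqlen : 2 ≤ q.length := by
    have := hc'.three_le_length
    rw [hq, SimpleGraph.Walk.length_cons] at this
    omega
  have hqn : ¬ q.Nil := by rw [SimpleGraph.Walk.nil_iff_length_eq]; omega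
  obtain ⟨z, r, hzx, hr⟩ := exists_concat q hqn
  obtain rfl : z = y := (hx z).mp hzx.symm
  have hrn : ¬ r.Nil := by
    rw [SimpleGraph.Walk.nil_iff_length_eq]
    have := congrArg SimpleGraph.Walk.length hr
    rw [SimpleGraph.Walk.length_concat] at this
    omega
  obtain ⟨a, hwa, r', hr'⟩ := SimpleGraph.Walk.not_nil_iff.mp hrn
  have : ¬ (c'.support.tail).Nodup := by
    rw [hq]
    simp only [SimpleGraph.Walk.support_cons, List.tail_cons]
    rw [hr, SimpleGraph.Walk.support_concat, hr', SimpleGraph.Walk.support_cons]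
    simp only [List.concat_eq_append, List.cons_append, List.nodup_cons]
    intro hn
    exact hn.1 (List.mem_append_left _ (r'.end_mem_support))
  exact this hc'.2

lemma walk_lift {W : Type*} {f : W → V} {H : SimpleGraph W} (hf : Function.Injective f)
    (hAdj : ∀ a b : W, H.Adj a b ↔ G.Adj (f a) (f b)) :
    ∀ {u v : V} (p : G.Walk u v), (∀ z ∈ p.support, ∃ a, f a = z) →
      ∀ (a b : W) (ha : f a = u) (hb : f b = v),
      ∃ p' : H.Walk a b, p'.map ⟨f, fun h => (hAdj _ _).mp h⟩ = p.copy ha.symm hb.symm := by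
  intro u v p
  induction p with
  | nil =>
    intro hsup a b ha hb
    subst ha
    obtain rfl : a = b := hf (hb.symm ▸ rfl)
    refine ⟨SimpleGraph.Walk.nil, by simp⟩
  | @cons u x v h q ih =>
    intro hsup a b ha hb
    subst ha; subst hb
    obtain ⟨c, hc⟩ := hsup x (by simp)
    subst hc
    have hadj : H.Adj a c := (hAdj a c).mpr h
    obtain ⟨q', hq'⟩ := ih (fun z hz => hsup z (by simp [hz])) c b rfl rfl
    refine ⟨SimpleGraph.Walk.cons hadj q', ?_⟩
    rw [SimpleGraph.Walk.map_cons, hq']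
    simp

lemma treeDeg_eq_ncard {n : ℕ} (G : SimpleGraph (Fin n)) (i : Fin n) :
    treeDeg G i = (G.neighborSet i).ncard := (Nat.card_coe_set_eq _)

lemma treeDeg_eq_degree {n : ℕ} (G : SimpleGraph (Fin n)) (i : Fin n) :
    treeDeg G i = G.degree i := by
  rw [treeDeg, Nat.card_eq_fintype_card, SimpleGraph.card_neighborSet_eq_degree]

lemma unbr_of_deg_one {n : ℕ} {G : SimpleGraph (Fin n)} {x : Fin n} (h : treeDeg G x = 1) :
    ∃ w, ∀ y, G.Adj x y ↔ y = w := by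
  rw [treeDeg_eq_ncard, Set.ncard_eq_one] at h
  obtain ⟨w, hw⟩ := h
  exact ⟨w, fun y => by rw [← SimpleGraph.mem_neighborSet, hw, Set.mem_singleton_iff]⟩

lemma deg_one_of_unbr {n : ℕ} {G : SimpleGraph (Fin n)} {x w : Fin n}
    (h : ∀ y, G.Adj x y ↔ y = w) : treeDeg G x = 1 := by
  rw [treeDeg_eq_ncard]
  have : G.neighborSet x = {w} := by ext y; simp [h y]
  rw [this, Set.ncard_singleton]

noncomputable def res {n : ℕ} (T : SimpleGraph (Fin (n+1))) : SimpleGraph (Fin n) :=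
  T.comap Fin.castSucc

@[simp] lemma res_adj {n : ℕ} (T : SimpleGraph (Fin (n+1))) (a b : Fin n) :
    (res T).Adj a b ↔ T.Adj a.castSucc b.castSucc := Iff.rfl

def gext {n : ℕ} (T : SimpleGraph (Fin n)) (j : Fin n) : SimpleGraph (Fin (n+1)) where
  Adj u v := (∃ a b, T.Adj a b ∧ u = a.castSucc ∧ v = b.castSucc) ∨
    (u = Fin.last n ∧ v = j.castSucc) ∨ (u = j.castSucc ∧ v = Fin.last n)
  symm := by
    constructor
    rintro u v (⟨a, b, h, rfl, rfl⟩ | ⟨rfl, rfl⟩ | ⟨rfl, rfl⟩)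
    · exact Or.inl ⟨b, a, h.symm, rfl, rfl⟩
    · exact Or.inr (Or.inr ⟨rfl, rfl⟩)
    · exact Or.inr (Or.inl ⟨rfl, rfl⟩)
  loopless := by
    constructor
    rintro u (⟨a, b, h, rfl, hab⟩ | ⟨rfl, h⟩ | ⟨h, rfl⟩)
    · exact h.ne (Fin.castSucc_injective _ hab)
    · exact (Fin.castSucc_lt_last j).ne' h
    · exact (Fin.castSucc_lt_last j).ne h.symm

lemma gext_adj_castSucc {n : ℕ} {T : SimpleGraph (Fin n)} {j a b : Fin n} :
    (gext T j).Adj a.castSucc b.castSucc ↔ T.Adj a b := by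
  constructor
  · rintro (⟨a', b', h, ha, hb⟩ | ⟨h, _⟩ | ⟨_, h⟩)
    · rwa [Fin.castSucc_injective _ ha, Fin.castSucc_injective _ hb]
    · exact absurd h (Fin.castSucc_lt_last a).ne
    · exact absurd h (Fin.castSucc_lt_last b).ne
  · exact fun h => Or.inl ⟨a, b, h, rfl, rfl⟩

lemma gext_adj_last {n : ℕ} {T : SimpleGraph (Fin n)} {j : Fin n} {v : Fin (n+1)} :
    (gext T j).Adj (Fin.last n) v ↔ v = j.castSucc := by
  constructor
  · rintro (⟨a', b', _, ha, _⟩ | ⟨_, h⟩ | ⟨h, _⟩)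
    · exact absurd ha.symm (Fin.castSucc_lt_last a').ne
    · exact h
    · exact absurd h.symm (Fin.castSucc_lt_last j).ne
  · rintro rfl; exact Or.inr (Or.inl ⟨rfl, rfl⟩)

lemma res_gext {n : ℕ} (T : SimpleGraph (Fin n)) (j : Fin n) : res (gext T j) = T := by
  ext a b
  rw [res_adj, gext_adj_castSucc]

lemma gext_res {n : ℕ} {T : SimpleGraph (Fin (n+1))} {j : Fin n}
    (hU : ∀ y, T.Adj (Fin.last n) y ↔ y = j.castSucc) : gext (res T) j = T := by
  ext u v
  rcases eq_or_ne u (Fin.last n) with rfl | hu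
  · rw [gext_adj_last, hU]
  · obtain ⟨a, rfl⟩ := Fin.exists_castSucc_eq.mpr hu
    rcases eq_or_ne v (Fin.last n) with rfl | hv
    · constructor
      · rintro (⟨a', b', _, _, hb⟩ | ⟨h, _⟩ | ⟨h, _⟩)
        · exact absurd hb.symm (Fin.castSucc_lt_last b').ne
        · exact absurd h (Fin.castSucc_lt_last a).ne
        · exact h ▸ ((hU a.castSucc).mpr h).symm
      · intro h
        have := (hU a.castSucc).mp h.symm
        exact Or.inr (Or.inr ⟨this, rfl⟩)
    · obtain ⟨b, rfl⟩ := Fin.exists_castSucc_eq.mpr hv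
      rw [gext_adj_castSucc, res_adj]

lemma gext_adj_castSucc_last {n : ℕ} {T : SimpleGraph (Fin n)} {j i : Fin n} :
    (gext T j).Adj i.castSucc (Fin.last n) ↔ i = j := by
  rw [SimpleGraph.adj_comm, gext_adj_last]
  exact ⟨fun h => Fin.castSucc_injective _ h, fun h => h ▸ rfl⟩

lemma treeDeg_gext_last {n : ℕ} (T : SimpleGraph (Fin n)) (j : Fin n) :
    treeDeg (gext T j) (Fin.last n) = 1 :=
  deg_one_of_unbr (fun _ => gext_adj_last)

lemma treeDeg_gext_castSucc {n : ℕ} (T : SimpleGraph (Fin n)) (j i : Fin n) :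
    treeDeg (gext T j) i.castSucc = treeDeg T i + (if i = j then 1 else 0) := by
  have hset : (gext T j).neighborSet i.castSucc =
      Fin.castSucc '' T.neighborSet i ∪ (if i = j then {Fin.last n} else ∅) := by
    ext y
    rcases eq_or_ne y (Fin.last n) with rfl | hy
    · simp only [SimpleGraph.mem_neighborSet, gext_adj_castSucc_last, Set.mem_union,
        Set.mem_image]
      constructor
      · intro h; right; simp [h]
      · rintro (⟨a, _, ha⟩ | h)
        · exact absurd ha (Fin.castSucc_lt_last a).ne
        · rcases eq_or_ne i j with h' | h' <;> simp [h'] at h ⊢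
    · obtain ⟨b, rfl⟩ := Fin.exists_castSucc_eq.mpr hy
      simp only [SimpleGraph.mem_neighborSet, gext_adj_castSucc, Set.mem_union, Set.mem_image]
      constructor
      · intro h; exact Or.inl ⟨b, h, rfl⟩
      · rintro (⟨a, ha, haeq⟩ | h)
        · rwa [← Fin.castSucc_injective _ haeq]
        · rcases eq_or_ne i j with h' | h' <;> simp [h'] at h
  rw [treeDeg_eq_ncard, treeDeg_eq_ncard, hset]
  rw [Set.ncard_union_eq ?disj (Set.toFinite _) (Set.toFinite _)]
  case disj =>
    rcases eq_or_ne i j with h' | h' <;> simp only [h', if_true, if_false]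
    · rw [Set.disjoint_singleton_right]
      rintro ⟨a, -, ha⟩
      exact (Fin.castSucc_lt_last a).ne ha
    · exact Set.disjoint_empty _
  rw [Set.ncard_image_of_injective _ (Fin.castSucc_injective n)]
  rcases eq_or_ne i j with h' | h' <;> simp [h']

lemma gext_isTree {n : ℕ} {T : SimpleGraph (Fin n)} (hT : T.IsTree) (j : Fin n) :
    (gext T j).IsTree := by
  have hne : Nonempty (Fin n) := hT.isConnected.nonempty
  constructor
  · rw [SimpleGraph.connected_iff]
    have key : ∀ u : Fin (n+1), (gext T j).Reachable u (Fin.last n) := by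
      intro u
      rcases eq_or_ne u (Fin.last n) with rfl | hu
      · exact SimpleGraph.Reachable.refl _
      · obtain ⟨a, rfl⟩ := Fin.exists_castSucc_eq.mpr hu
        have h1 := SimpleGraph.Reachable.map
          (⟨Fin.castSucc, fun h => gext_adj_castSucc.mpr h⟩ : T →g gext T j)
          (hT.isConnected.preconnected a j)
        exact h1.trans (SimpleGraph.Adj.reachable
          (show (gext T j).Adj j.castSucc (Fin.last n) from gext_adj_castSucc_last.mpr rfl))
    exact ⟨fun u v => (key u).trans (key v).symm, ⟨Fin.last n⟩⟩
  · intro v c hc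
    have hx : Fin.last n ∉ c.support := cycle_avoids_leaf (fun _ => gext_adj_last) hc
    have hv : v ≠ Fin.last n := fun h => hx (h ▸ c.start_mem_support)
    obtain ⟨a, ha⟩ := Fin.exists_castSucc_eq.mpr hv
    obtain ⟨c', hc'⟩ := walk_lift (H := T) (Fin.castSucc_injective n)
      (fun a b => gext_adj_castSucc.symm) c
      (fun z hz => Fin.exists_castSucc_eq.mpr (fun h => hx (h ▸ hz))) a a ha ha
    have hmap : (c'.map (⟨Fin.castSucc, fun h => gext_adj_castSucc.mpr h⟩ :
        T →g gext T j)).IsCycle := by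
      rw [hc']
      exact (SimpleGraph.Walk.isCycle_copy _ _).mpr hc
    exact hT.IsAcyclic c' ((SimpleGraph.Walk.map_isCycle_iff_of_injective
      (fun _ _ h => Fin.castSucc_injective n h)).mp hmap)

lemma res_isTree {n : ℕ} (hn : 1 ≤ n) {T : SimpleGraph (Fin (n+1))} (hT : T.IsTree) {j : Fin n}
    (hU : ∀ y, T.Adj (Fin.last n) y ↔ y = j.castSucc) : (res T).IsTree := by
  constructor
  · rw [SimpleGraph.connected_iff]
    refine ⟨fun a b => ?_, ⟨⟨0, hn⟩⟩⟩
    obtain ⟨w⟩ := hT.isConnected.preconnected a.castSucc b.castSucc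
    have hp : (w.toPath : T.Walk a.castSucc b.castSucc).IsPath := by exact w.toPath.2
    have hx : Fin.last n ∉ (w.toPath : T.Walk a.castSucc b.castSucc).support :=
      path_avoids_leaf hU hp (Fin.castSucc_lt_last a).ne (Fin.castSucc_lt_last b).ne
    obtain ⟨c', -⟩ := walk_lift (H := res T) (Fin.castSucc_injective n)
      (fun a b => Iff.rfl) (w.toPath : T.Walk a.castSucc b.castSucc)
      (fun z hz => Fin.exists_castSucc_eq.mpr (fun h => hx (h ▸ hz))) a b rfl rfl
    exact ⟨c'⟩
  · intro v c hc
    exact hT.IsAcyclic (c.map (⟨Fin.castSucc, fun h => h⟩ : res T →g T))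
      (hc.map (fun _ _ h => Fin.castSucc_injective n h))

lemma treeDeg_pos {n : ℕ} (hn : 2 ≤ n) {T : SimpleGraph (Fin n)} (hT : T.IsTree) (i : Fin n) :
    1 ≤ treeDeg T i := by
  haveI : Nontrivial (Fin n) := Fin.nontrivial_iff_two_le.mpr hn
  obtain ⟨j, hj⟩ := exists_ne i
  obtain ⟨w⟩ := hT.isConnected.preconnected i j
  obtain ⟨x, hx, -, -⟩ := SimpleGraph.Walk.not_nil_iff.mp
    (SimpleGraph.Walk.not_nil_of_ne (p := w) (Ne.symm hj))
  rw [treeDeg_eq_degree]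
  exact (SimpleGraph.degree_pos_iff_exists_adj _ _).mpr ⟨x, hx⟩

lemma sum_treeDeg {n : ℕ} {T : SimpleGraph (Fin n)} (hT : T.IsTree) :
    ∑ i, treeDeg T i = 2 * n - 2 := by
  have h1 := T.sum_degrees_eq_twice_card_edges
  have h2 := hT.card_edgeFinset
  rw [Fintype.card_fin] at h2
  have h3 : ∑ i, treeDeg T i = ∑ i, T.degree i := by
    exact Finset.sum_congr rfl fun i _ => treeDeg_eq_degree T i
  omega

lemma fiber_card {n : ℕ} (hn : 1 ≤ n) (d : Fin (n+1) → ℕ) (hdl : d (Fin.last n) = 1)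
    (j : Fin n) (d' : Fin n → ℕ)
    (hd' : ∀ i, d (Fin.castSucc i) = d' i + (if i = j then 1 else 0)) :
    ((treeFinset (n+1)).filter
        (fun T => treeDeg T = d ∧ T.Adj (Fin.last n) j.castSucc)).card
      = ((treeFinset n).filter (fun T => treeDeg T = d')).card := by
  refine Finset.card_bij' (fun T _ => res T) (fun T' _ => gext T' j) ?hi ?hj ?left ?right
  case hi =>
    intro T hT
    simp only [treeFinset, Finset.mem_filter, Finset.mem_univ, true_and] at hT ⊢
    obtain ⟨htree, hdeg, hadj⟩ := hT
    obtain ⟨w, hw⟩ := unbr_of_deg_one (x := Fin.last n) (by rw [hdeg, hdl])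
    obtain rfl : w = j.castSucc := ((hw j.castSucc).mp hadj).symm
    have hge : gext (res T) j = T := gext_res hw
    refine ⟨res_isTree hn htree hw, funext fun i => ?_⟩
    have := treeDeg_gext_castSucc (res T) j i
    rw [hge, hdeg] at this
    have h2 := hd' i
    omega
  case hj =>
    intro T' hT'
    simp only [treeFinset, Finset.mem_filter, Finset.mem_univ, true_and] at hT' ⊢
    obtain ⟨htree, hdeg⟩ := hT'
    refine ⟨gext_isTree htree j, ?_, gext_adj_last.mpr rfl⟩
    funext i
    refine Fin.lastCases ?_ (fun i => ?_) i
    · rw [treeDeg_gext_last, hdl]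
    · rw [treeDeg_gext_castSucc, hdeg, hd']
  case left =>
    intro T hT
    simp only [treeFinset, Finset.mem_filter, Finset.mem_univ, true_and] at hT
    obtain ⟨htree, hdeg, hadj⟩ := hT
    obtain ⟨w, hw⟩ := unbr_of_deg_one (x := Fin.last n) (by rw [hdeg, hdl])
    obtain rfl : w = j.castSucc := ((hw j.castSucc).mp hadj).symm
    exact gext_res hw
  case right =>
    intro T' _
    exact res_gext T' j

lemma card_TW_eq_sum {n : ℕ} (d : Fin (n+1) → ℕ) (hdl : d (Fin.last n) = 1) :
    ((treeFinset (n+1)).filter (fun T => treeDeg T = d)).card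
      = ∑ j : Fin n, ((treeFinset (n+1)).filter
          (fun T => treeDeg T = d ∧ T.Adj (Fin.last n) j.castSucc)).card := by
  classical
  set s := (treeFinset (n+1)).filter (fun T => treeDeg T = d) with hs
  have hsplit : ∀ j : Fin n, (treeFinset (n+1)).filter
      (fun T => treeDeg T = d ∧ T.Adj (Fin.last n) j.castSucc)
      = s.filter (fun T => T.Adj (Fin.last n) j.castSucc) := by
    intro j
    rw [hs, Finset.filter_filter]
  simp only [hsplit]
  rw [← Finset.card_biUnion]
  · congr 1
    ext T
    simp only [Finset.mem_biUnion, Finset.mem_univ, true_and, Finset.mem_filter]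
    constructor
    · intro hT
      have hdeg : treeDeg T = d := (Finset.mem_filter.mp hT).2
      obtain ⟨w, hw⟩ := unbr_of_deg_one (x := Fin.last n) (by rw [hdeg, hdl])
      have hadj : T.Adj (Fin.last n) w := (hw w).mpr rfl
      obtain ⟨a, rfl⟩ := Fin.exists_castSucc_eq.mpr (Ne.symm hadj.ne)
      exact ⟨a, hT, hadj⟩
    · rintro ⟨a, h, -⟩
      exact h
  · intro j1 _ j2 _ hne
    refine Finset.disjoint_left.mpr fun T h1 h2 => ?_
    simp only [Finset.mem_filter] at h1 h2
    have hdeg : treeDeg T = d := (Finset.mem_filter.mp h1.1).2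
    obtain ⟨w, hw⟩ := unbr_of_deg_one (x := Fin.last n) (by rw [hdeg, hdl])
    have e1 := (hw _).mp h1.2
    have e2 := (hw _).mp h2.2
    exact hne (Fin.castSucc_injective _ (e1.trans e2.symm))

lemma fiber_empty {n : ℕ} (hn : 2 ≤ n) (d : Fin (n+1) → ℕ) (hdl : d (Fin.last n) = 1)
    (j : Fin n) (hdj : d j.castSucc = 1) :
    ((treeFinset (n+1)).filter
      (fun T => treeDeg T = d ∧ T.Adj (Fin.last n) j.castSucc)) = ∅ := by
  rw [Finset.eq_empty_iff_forall_notMem]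
  intro T hT
  simp only [treeFinset, Finset.mem_filter, Finset.mem_univ, true_and] at hT
  obtain ⟨htree, hdeg, hadj⟩ := hT
  obtain ⟨w, hw⟩ := unbr_of_deg_one (x := Fin.last n) (by rw [hdeg, hdl])
  obtain rfl : w = j.castSucc := ((hw j.castSucc).mp hadj).symm
  obtain ⟨w2, hw2⟩ := unbr_of_deg_one (x := j.castSucc) (by rw [hdeg, hdj])
  obtain rfl : w2 = Fin.last n := ((hw2 (Fin.last n)).mp hadj.symm).symm
  have hclosed : ∀ x ∈ ({Fin.last n, j.castSucc} : Set (Fin (n+1))), ∀ y, T.Adj x y →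
      y ∈ ({Fin.last n, j.castSucc} : Set (Fin (n+1))) := by
    rintro x (rfl | rfl) y hxy
    · exact Or.inr ((hw y).mp hxy)
    · exact Or.inl ((hw2 y).mp hxy)
  obtain ⟨u, hu1, hu2⟩ : ∃ u : Fin (n+1), u ≠ Fin.last n ∧ u ≠ j.castSucc := by
    rcases eq_or_ne (j.castSucc : Fin (n+1)) ⟨0, by omega⟩ with h0 | h0
    · refine ⟨⟨1, by omega⟩, ?_, ?_⟩
      · simp only [ne_eq, Fin.ext_iff, Fin.val_last]; omega
      · rw [h0]; simp only [ne_eq, Fin.ext_iff]; omega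
    · refine ⟨⟨0, by omega⟩, ?_, ?_⟩
      · simp only [ne_eq, Fin.ext_iff, Fin.val_last]; omega
      · exact fun h => h0 (h.symm)
  obtain ⟨w⟩ := htree.isConnected.preconnected (Fin.last n) u
  rcases walk_closed hclosed w (Or.inl rfl) with h | h
  · exact hu1 h
  · exact hu2 h

lemma isTree_comap_equiv {V W : Type*} (σ : V ≃ W) {T : SimpleGraph W} (hT : T.IsTree) :
    (T.comap ⇑σ).IsTree := by
  constructor
  · exact (SimpleGraph.Iso.connected_iff (SimpleGraph.Iso.comap σ T)).mpr hT.isConnected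
  · intro v c hc
    exact hT.IsAcyclic (c.map (SimpleGraph.Hom.comap ⇑σ T))
      (hc.map (fun _ _ h => σ.injective h))

lemma treeDeg_comap {n : ℕ} (T : SimpleGraph (Fin n)) (σ : Equiv.Perm (Fin n)) (i : Fin n) :
    treeDeg (T.comap ⇑σ) i = treeDeg T (σ i) := by
  rw [treeDeg_eq_ncard, treeDeg_eq_ncard]
  have : (T.comap ⇑σ).neighborSet i = ⇑σ ⁻¹' (T.neighborSet (σ i)) := rfl
  rw [this, show ⇑σ ⁻¹' T.neighborSet (σ i) = ⇑σ.symm '' T.neighborSet (σ i) from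
    (σ.symm.image_eq_preimage_symm _).symm, Set.ncard_image_of_injective _ σ.symm.injective]

lemma card_TW_comp {n : ℕ} (d : Fin n → ℕ) (σ : Equiv.Perm (Fin n)) :
    ((treeFinset n).filter (fun T => treeDeg T = d)).card
      = ((treeFinset n).filter (fun T => treeDeg T = d ∘ ⇑σ)).card := by
  refine Finset.card_bij' (fun T _ => T.comap ⇑σ) (fun T _ => T.comap ⇑σ.symm) ?_ ?_ ?_ ?_
  · intro T hT
    simp only [treeFinset, Finset.mem_filter, Finset.mem_univ, true_and] at hT ⊢
    refine ⟨isTree_comap_equiv σ hT.1, funext fun i => ?_⟩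
    rw [treeDeg_comap, hT.2]; rfl
  · intro T hT
    simp only [treeFinset, Finset.mem_filter, Finset.mem_univ, true_and] at hT ⊢
    refine ⟨isTree_comap_equiv σ.symm hT.1, funext fun i => ?_⟩
    rw [treeDeg_comap, hT.2]
    simp
  · intro T _
    show (T.comap ⇑σ).comap ⇑σ.symm = T
    rw [SimpleGraph.comap_comap]
    simp
  · intro T _
    show (T.comap ⇑σ.symm).comap ⇑σ = T
    rw [SimpleGraph.comap_comap]
    simp

lemma top_isTree {n : ℕ} (hn : 1 ≤ n) (hn2 : n ≤ 2) : (⊤ : SimpleGraph (Fin n)).IsTree := by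
  constructor
  · rw [SimpleGraph.connected_iff]
    refine ⟨fun a b => ?_, ⟨⟨0, hn⟩⟩⟩
    rcases eq_or_ne a b with rfl | hab
    · exact SimpleGraph.Reachable.refl _
    · exact SimpleGraph.Adj.reachable hab
  · intro v c hc
    have h3 := hc.three_le_length
    have hnodup := hc.2
    have hlen : c.support.tail.length = c.length := by
      have := c.length_support
      simp only [List.length_tail, this]
      omega
    have := hnodup.length_le_card
    rw [hlen, Fintype.card_fin] at this
    omega

lemma treeFinset_two : treeFinset 2 = {(⊤ : SimpleGraph (Fin 2))} := by
  ext G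
  simp only [treeFinset, Finset.mem_filter, Finset.mem_univ, true_and, Finset.mem_singleton]
  constructor
  · intro hG
    ext a b
    simp only [SimpleGraph.top_adj]
    constructor
    · exact fun h => h.ne
    · intro hab
      obtain ⟨w⟩ := hG.isConnected.preconnected a b
      obtain ⟨x, hx, -, -⟩ := SimpleGraph.Walk.not_nil_iff.mp
        (SimpleGraph.Walk.not_nil_of_ne (p := w) hab)
      have : x = b := by
        have h1 : x ≠ a := hx.ne'
        have := x.2; have := a.2; have := b.2
        rw [Fin.ne_iff_vne] at h1 hab
        rw [Fin.ext_iff]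
        omega
      exact this ▸ hx
  · rintro rfl
    exact top_isTree (by omega) (by omega)

lemma treeDeg_top_two (i : Fin 2) : treeDeg (⊤ : SimpleGraph (Fin 2)) i = 1 := by
  rw [treeDeg_eq_ncard]
  have : (⊤ : SimpleGraph (Fin 2)).neighborSet i = {i + 1} := by
    ext y
    simp only [SimpleGraph.mem_neighborSet, SimpleGraph.top_adj, Set.mem_singleton_iff]
    have hi := i.2; have hy := y.2
    rw [Fin.ne_iff_vne, Fin.ext_iff, Fin.val_add]
    simp only [Fin.val_one]
    omega
  rw [this, Set.ncard_singleton]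

lemma key_step {n : ℕ} (hn : 2 ≤ n)
    (ih : ∀ d : Fin n → ℕ, (∀ i, 1 ≤ d i) → ∑ i, d i = 2 * n - 2 →
      ((treeFinset n).filter (fun T => treeDeg T = d)).card * ∏ i, (d i - 1).factorial
        = (n - 2).factorial)
    (d : Fin (n+1) → ℕ) (hd1 : ∀ i, 1 ≤ d i) (hsum : ∑ i, d i = 2 * (n+1) - 2)
    (hdl : d (Fin.last n) = 1) :
    ((treeFinset (n+1)).filter (fun T => treeDeg T = d)).card * ∏ i, (d i - 1).factorial
      = (n - 1).factorial := by
  have hsumc : ∑ i : Fin n, d i.castSucc = 2 * n - 1 := by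
    have := Fin.sum_univ_castSucc (f := d)
    omega
  have hP : ∏ i, (d i - 1).factorial = ∏ i : Fin n, (d i.castSucc - 1).factorial := by
    rw [Fin.prod_univ_castSucc (f := fun i => (d i - 1).factorial), hdl]
    simp
  rw [card_TW_eq_sum d hdl, Finset.sum_mul, hP]
  have hterm : ∀ j : Fin n,
      ((treeFinset (n+1)).filter
        (fun T => treeDeg T = d ∧ T.Adj (Fin.last n) j.castSucc)).card
        * ∏ i : Fin n, (d i.castSucc - 1).factorial
      = (d j.castSucc - 1) * (n - 2).factorial := by
    intro j
    rcases eq_or_lt_of_le (hd1 j.castSucc) with h1 | h2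
    · rw [fiber_empty hn d hdl j h1.symm]
      simp [← h1]
    · -- 2 ≤ d j.castSucc
      have h2' : 2 ≤ d j.castSucc := h2
      set d' : Fin n → ℕ := fun i => d i.castSucc - (if i = j then 1 else 0) with hd'def
      have hd' : ∀ i, d (Fin.castSucc i) = d' i + (if i = j then 1 else 0) := by
        intro i
        rcases eq_or_ne i j with rfl | hij
        · simp only [hd'def, if_true]
          omega
        · simp [hd'def, hij]
      rw [fiber_card (by omega) d hdl j d' hd']
      have hd'1 : ∀ i, 1 ≤ d' i := by
        intro i
        rcases eq_or_ne i j with rfl | hij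
        · simp only [hd'def, if_true]
          omega
        · simp only [hd'def, if_neg hij]
          have := hd1 i.castSucc
          omega
      have hd'sum : ∑ i, d' i = 2 * n - 2 := by
        have h := Finset.sum_congr rfl (fun i (_ : i ∈ Finset.univ) => hd' i)
        rw [Finset.sum_add_distrib, Finset.sum_ite_eq' Finset.univ j] at h
        simp only [Finset.mem_univ, if_true] at h
        omega
      have hIH := ih d' hd'1 hd'sum
      have hprod : ∏ i : Fin n, (d i.castSucc - 1).factorial
          = (d j.castSucc - 1) * ∏ i : Fin n, (d' i - 1).factorial := by
        rw [← Finset.mul_prod_erase Finset.univ (fun i => (d i.castSucc - 1).factorial)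
            (Finset.mem_univ j),
          ← Finset.mul_prod_erase Finset.univ (fun i => (d' i - 1).factorial)
            (Finset.mem_univ j)]
        have hrest : ∏ i ∈ Finset.univ.erase j, (d i.castSucc - 1).factorial
            = ∏ i ∈ Finset.univ.erase j, (d' i - 1).factorial := by
          refine Finset.prod_congr rfl fun i hi => ?_
          have hij := Finset.ne_of_mem_erase hi
          simp [hd'def, hij]
        rw [hrest]
        have hj' : d' j = d j.castSucc - 1 := by simp [hd'def]
        obtain ⟨k, hk⟩ : ∃ k, d j.castSucc = k + 2 := ⟨d j.castSucc - 2, by omega⟩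
        rw [hj', hk]
        have e1 : k + 2 - 1 = k + 1 := by omega
        have e2 : k + 1 - 1 = k := by omega
        rw [e1, e2, Nat.factorial_succ]
        ring
      rw [hprod, ← mul_assoc, mul_comm _ (d j.castSucc - 1), mul_assoc, hIH]
  rw [Finset.sum_congr rfl (fun j _ => hterm j), ← Finset.sum_mul]
  have hsum2 : ∑ j : Fin n, (d j.castSucc - 1) = n - 1 := by
    have h : ∑ j : Fin n, ((d j.castSucc - 1) + 1) = ∑ j : Fin n, d j.castSucc := by
      refine Finset.sum_congr rfl fun j _ => ?_
      have := hd1 j.castSucc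
      omega
    rw [Finset.sum_add_distrib] at h
    simp only [Finset.sum_const, Finset.card_univ, Fintype.card_fin, smul_eq_mul, mul_one] at h
    omega
  rw [hsum2]
  obtain ⟨k, hk⟩ : ∃ k, n = k + 2 := ⟨n - 2, by omega⟩
  subst hk
  simp only [Nat.add_sub_cancel]
  have h1 : k + 2 - 1 = k + 1 := by omega
  rw [h1, Nat.factorial_succ]

lemma key (n : ℕ) (hn : 2 ≤ n) :
    ∀ d : Fin n → ℕ, (∀ i, 1 ≤ d i) → ∑ i, d i = 2 * n - 2 →
      ((treeFinset n).filter (fun T => treeDeg T = d)).card * ∏ i, (d i - 1).factorial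
        = (n - 2).factorial := by
  induction n, hn using Nat.le_induction with
  | base =>
    intro d hd1 hsum
    have hsum2 : d 0 + d 1 = 2 := by
      have := Fin.sum_univ_two (f := d)
      omega
    have hd0 : d 0 = 1 := by have := hd1 0; have := hd1 1; omega
    have hd1' : d 1 = 1 := by have := hd1 0; have := hd1 1; omega
    have hdeq : d = fun _ => 1 := by
      funext i
      have : i = 0 ∨ i = 1 := by omega
      rcases this with rfl | rfl <;> assumption
    subst hdeq
    rw [treeFinset_two]
    have : Finset.filter (fun T => treeDeg T = fun _ => 1)
        ({(⊤ : SimpleGraph (Fin 2))} : Finset (SimpleGraph (Fin 2)))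
        = {(⊤ : SimpleGraph (Fin 2))} := by
      rw [Finset.filter_eq_self]
      intro T hT
      rw [Finset.mem_singleton] at hT
      subst hT
      funext i
      exact treeDeg_top_two i
    rw [this]
    simp
  | succ n hn ih =>
    intro d hd1 hsum
    obtain ⟨i0, hi0⟩ : ∃ i0, d i0 = 1 := by
      by_contra hno
      push_neg at hno
      have h2 : ∀ i, 2 ≤ d i := by
        intro i
        have := hd1 i; have := hno i; omega
      have : ∑ i : Fin (n+1), 2 ≤ ∑ i, d i := Finset.sum_le_sum (fun i _ => h2 i)
      simp only [Finset.sum_const, Finset.card_univ, Fintype.card_fin, smul_eq_mul] at this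
      omega
    set σ : Equiv.Perm (Fin (n+1)) := Equiv.swap (Fin.last n) i0 with hσ
    have hcard := card_TW_comp d σ
    have hprod : ∏ i, (d i - 1).factorial = ∏ i, ((d ∘ ⇑σ) i - 1).factorial := by
      exact (Equiv.prod_comp σ (fun i => (d i - 1).factorial)).symm
    have hsum' : ∑ i, (d ∘ ⇑σ) i = 2 * (n+1) - 2 := by
      have h := Equiv.sum_comp σ d
      have : ∑ i, (d ∘ ⇑σ) i = ∑ i, d (σ i) := rfl
      rw [this, h, hsum]
    have hd1' : ∀ i, 1 ≤ (d ∘ ⇑σ) i := fun i => hd1 _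
    have hdl : (d ∘ ⇑σ) (Fin.last n) = 1 := by
      simp only [Function.comp_apply, hσ, Equiv.swap_apply_left]
      exact hi0
    rw [hcard, hprod]
    have := key_step hn ih (d ∘ ⇑σ) hd1' hsum' hdl
    rw [this]
    rfl

lemma card_adt (k m : ℕ) :
    (Finset.Nat.antidiagonalTuple k m).card = (k + m - 1).choose m := by
  have e : ↥(Finset.Nat.antidiagonalTuple k m) ≃ Sym (Fin k) m :=
    (Equiv.subtypeEquivRight (fun f => Finset.Nat.mem_antidiagonalTuple)).trans
      (Sym.equivNatSumOfFintype (Fin k) m).symm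
  rw [Finset.card_eq_of_equiv_fintype e, Sym.card_sym_eq_choose, Fintype.card_fin]

/-- The Leroux–Miloudi formula -/
theorem leroux_miloudi (n : ℕ) (hn : 2 ≤ n) :
    ∑ T ∈ treeFinset n, ∏ i, Nat.factorial (treeDeg T i - 1) =
      Nat.factorial (n - 2) * Nat.choose (2 * n - 3) (n - 1) := by
  classical
  set D := (Finset.Nat.antidiagonalTuple n (2*n - 2)).filter (fun d => ∀ i, 1 ≤ d i) with hD
  have hmaps : ∀ T ∈ treeFinset n, treeDeg T ∈ D := by
    intro T hT
    have htree : T.IsTree := by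
      simpa [treeFinset] using hT
    rw [hD, Finset.mem_filter, Finset.Nat.mem_antidiagonalTuple]
    exact ⟨sum_treeDeg htree, treeDeg_pos hn htree⟩
  have hgroup := Finset.sum_fiberwise_of_maps_to hmaps
    (fun T => ∏ i, (treeDeg T i - 1).factorial)
  rw [← hgroup]
  have hinner : ∀ d ∈ D, (∑ T ∈ (treeFinset n).filter (fun T => treeDeg T = d),
      ∏ i, (treeDeg T i - 1).factorial) = (n - 2).factorial := by
    intro d hd
    rw [hD, Finset.mem_filter, Finset.Nat.mem_antidiagonalTuple] at hd
    have hc : ∀ T ∈ (treeFinset n).filter (fun T => treeDeg T = d),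
        (∏ i, (treeDeg T i - 1).factorial) = ∏ i, (d i - 1).factorial := by
      intro T hT
      rw [(Finset.mem_filter.mp hT).2]
    rw [Finset.sum_congr rfl hc, Finset.sum_const, smul_eq_mul]
    exact key n hn d hd.2 hd.1
  rw [Finset.sum_congr rfl hinner, Finset.sum_const, smul_eq_mul, mul_comm]
  congr 1
  have hcard : D.card = (Finset.Nat.antidiagonalTuple n (n - 2)).card := by
    refine Finset.card_bij' (fun d _ => fun i => d i - 1) (fun e _ => fun i => e i + 1)
      ?_ ?_ ?_ ?_
    · intro d hd
      rw [hD, Finset.mem_filter, Finset.Nat.mem_antidiagonalTuple] at hd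
      rw [Finset.Nat.mem_antidiagonalTuple]
      have h : (∑ i, (d i - 1)) + ∑ _i : Fin n, 1 = ∑ i, d i := by
        rw [← Finset.sum_add_distrib]
        exact Finset.sum_congr rfl fun i _ => by have := hd.2 i; omega
      simp only [Finset.sum_const, Finset.card_univ, Fintype.card_fin, smul_eq_mul,
        mul_one] at h
      omega
    · intro e he
      rw [Finset.Nat.mem_antidiagonalTuple] at he
      rw [hD, Finset.mem_filter, Finset.Nat.mem_antidiagonalTuple]
      constructor
      · rw [Finset.sum_add_distrib]
        simp only [Finset.sum_const, Finset.card_univ, Fintype.card_fin, smul_eq_mul, mul_one]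
        omega
      · intro i
        exact Nat.le_add_left 1 (e i)
    · intro d hd
      dsimp only
      rw [hD, Finset.mem_filter] at hd
      funext i
      have := hd.2 i
      omega
    · intro e _
      dsimp only
      funext i
      omega
  rw [hcard, card_adt]
  have h1 : n + (n - 2) - 1 = 2 * n - 3 := by omega
  rw [h1]
  have h2 : n - 2 = 2 * n - 3 - (n - 1) := by omega
  rw [h2, Nat.choose_symm (by omega)]
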